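/- Let Γ ≤ G be an almost normal subgroup and suppose the map g ↦ [Γ : Γ_g] (with Γ_g = gΓg⁻¹ ∩ Γ) satisfies [Γ : Γ_g] = [Γ : Γ_{g⁻¹}] for all g ∈ G. Then the function Δ : G → ℚ₊ defined by Δ(g) = [Γ : Γ_{g⁻¹}]/[Γ : Γ_g] is identically 1; in general (without the hypothesis) Δ is a group homomorphism from G to the multiplicative group of positive rationals. -/

import Mathlib

/-!
Let `r(H, K) = [K : H ∩ K] / [H : H ∩ K]` (`Subgroup.indexRatio`). Measuring both indices against
one subgroup `D ≤ H ∩ K ∩ L` of finite index gives `r(H, K) = [K : D] / [H : D]`, so `r` is a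
cocycle on commensurable subgroups: `r(H, K) r(K, L) = r(H, L)`. It is invariant under
conjugation, and `Δ(g) = r(Γ, gΓg⁻¹)`, hence
`Δ(g₁g₂) = r(Γ, g₁Γg₁⁻¹) r(g₁Γg₁⁻¹, g₁g₂Γ(g₁g₂)⁻¹) = Δ(g₁) r(Γ, g₂Γg₂⁻¹) = Δ(g₁) Δ(g₂)`.
-/

/-- The modular function of the Hecke pair `(G, Γ)`:
`Δ(g) = [Γ : Γ_{g⁻¹}] / [Γ : Γ_g]` where `Γ_g = gΓg⁻¹ ∩ Γ`. -/
noncomputable def modularDelta {G : Type*} [Group G] (Γ : Subgroup G) (g : G) : ℚ :=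
  (((Γ.map (MulAut.conj g⁻¹).toMonoidHom ⊓ Γ).relIndex Γ : ℚ)) /
    (((Γ.map (MulAut.conj g).toMonoidHom ⊓ Γ).relIndex Γ : ℚ))

open scoped Pointwise

namespace Subgroup

variable {G : Type*} [Group G]

noncomputable def indexRatio (H K : Subgroup G) : ℚ :=
  (H.relIndex K : ℚ) / K.relIndex H

theorem indexRatio_eq_div_of_le_inf {D H K : Subgroup G} (hD : D ≤ H ⊓ K)
    (hDfin : D.relIndex (H ⊓ K) ≠ 0) :
    indexRatio H K = (D.relIndex K : ℚ) / D.relIndex H := by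
  have hK : D.relIndex K = D.relIndex (H ⊓ K) * H.relIndex K := by
    rw [← inf_relIndex_right H K, relIndex_mul_relIndex D (H ⊓ K) K hD inf_le_right]
  have hH : D.relIndex H = D.relIndex (H ⊓ K) * K.relIndex H := by
    rw [← inf_relIndex_left H K, relIndex_mul_relIndex D (H ⊓ K) H hD inf_le_left]
  rw [indexRatio, hK, hH, Nat.cast_mul, Nat.cast_mul,
    mul_div_mul_left _ _ (Nat.cast_ne_zero.mpr hDfin)]

theorem Commensurable.indexRatio_mul_indexRatio {H K L : Subgroup G}
    (hHK : Commensurable H K) (hKL : Commensurable K L) :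
    indexRatio H K * indexRatio K L = indexRatio H L := by
  have hHK_D : (H ⊓ K ⊓ L).relIndex (H ⊓ K) ≠ 0 := by
    rw [inf_relIndex_left]
    exact mt (relIndex_eq_zero_of_le_right inf_le_right) hKL.2
  have hKL_D : (H ⊓ K ⊓ L).relIndex (K ⊓ L) ≠ 0 := by
    rw [inf_assoc, inf_relIndex_right]
    exact mt (relIndex_eq_zero_of_le_right inf_le_left) hHK.1
  have hHL_D : (H ⊓ K ⊓ L).relIndex (H ⊓ L) ≠ 0 := by
    rw [inf_right_comm, inf_relIndex_left]
    exact mt (relIndex_eq_zero_of_le_right inf_le_right) hKL.1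
  have hK_D : ((H ⊓ K ⊓ L).relIndex K : ℚ) ≠ 0 :=
    Nat.cast_ne_zero.mpr (relIndex_ne_zero_trans hHK_D (inf_relIndex_right H K ▸ hHK.1))
  rw [indexRatio_eq_div_of_le_inf inf_le_left hHK_D,
    indexRatio_eq_div_of_le_inf (le_inf (inf_le_left.trans inf_le_right) inf_le_right) hKL_D,
    indexRatio_eq_div_of_le_inf (le_inf (inf_le_left.trans inf_le_left) inf_le_right) hHL_D,
    mul_comm, div_mul_div_cancel₀ hK_D]

theorem Commensurable.smul {M : Type*} [Group M] [MulDistribMulAction M G] {H K : Subgroup G}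
    (hHK : Commensurable H K) (m : M) : Commensurable (m • H) (m • K) := by
  rwa [Commensurable, relIndex_pointwise_smul, relIndex_pointwise_smul]

theorem indexRatio_smul {M : Type*} [Group M] [MulDistribMulAction M G] (m : M)
    (H K : Subgroup G) : indexRatio (m • H) (m • K) = indexRatio H K := by
  simp only [indexRatio, relIndex_pointwise_smul]

theorem relIndex_conj_inv_smul (Γ : Subgroup G) (g : G) :
    (MulAut.conj g⁻¹ • Γ).relIndex Γ = Γ.relIndex (MulAut.conj g • Γ) := by
  rw [← relIndex_pointwise_smul (MulAut.conj g), smul_smul, ← map_mul, mul_inv_cancel, map_one,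
    one_smul]

end Subgroup

open Subgroup

theorem modularDelta_eq_indexRatio {G : Type*} [Group G] (Γ : Subgroup G) (g : G) :
    modularDelta Γ g = indexRatio Γ (MulAut.conj g • Γ) := by
  rw [modularDelta, indexRatio, inf_relIndex_right, inf_relIndex_right, ← relIndex_conj_inv_smul]
  rfl

theorem modularDelta_mul {G : Type*} [Group G] {Γ : Subgroup G}
    (hΓ : ∀ g : G, Commensurable Γ (MulAut.conj g • Γ)) (g₁ g₂ : G) :
    modularDelta Γ (g₁ * g₂) = modularDelta Γ g₁ * modularDelta Γ g₂ := by
  have hconj : MulAut.conj (g₁ * g₂) • Γ = MulAut.conj g₁ • MulAut.conj g₂ • Γ := by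
    rw [map_mul, mul_smul]
  simp only [modularDelta_eq_indexRatio, hconj,
    ← (hΓ g₁).indexRatio_mul_indexRatio ((hΓ g₂).smul (MulAut.conj g₁)), indexRatio_smul]

/-- Let `Γ ≤ G` be almost normal. If `[Γ : Γ_g] = [Γ : Γ_{g⁻¹}]` for all `g`, then
`Δ ≡ 1`; and in general `Δ : G → ℚ₊` is a group homomorphism (the modular function
of the Hecke pair `(G, Γ)`). -/
theorem stmt_9 {G : Type*} [Group G] (Γ : Subgroup G)
    (h : ∀ g : G, (Γ.map (MulAut.conj g).toMonoidHom ⊓ Γ).relIndex Γ ≠ 0) :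
    ((∀ g : G, (Γ.map (MulAut.conj g).toMonoidHom ⊓ Γ).relIndex Γ =
        (Γ.map (MulAut.conj g⁻¹).toMonoidHom ⊓ Γ).relIndex Γ) →
      ∀ g : G, modularDelta Γ g = 1) ∧
    (∀ g₁ g₂ : G, modularDelta Γ (g₁ * g₂) = modularDelta Γ g₁ * modularDelta Γ g₂) := by
  have hcomm : ∀ g : G, Commensurable Γ (MulAut.conj g • Γ) := fun g =>
    ⟨by rw [← relIndex_conj_inv_smul, ← inf_relIndex_right]; exact h g⁻¹,
      by rw [← inf_relIndex_right]; exact h g⟩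
  refine ⟨fun hsymm g => ?_, modularDelta_mul hcomm⟩
  rw [modularDelta, ← hsymm g, div_self (Nat.cast_ne_zero.mpr (h g))]
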